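/- arXiv:2105.04808 — 2 statements merged into one kernel-verified Lean document; each statement's English description precedes it below -/
import Mathlib

section
/- Let Δ > 0, σ > 0, ε ≥ 0 and δ ∈ [0,1] satisfy the analytic-Gaussian condition Φ(Δ/(2σ) − εσ/Δ) − e^ε·Φ(−Δ/(2σ) − εσ/Δ) ≤ δ. Then the one-dimensional Gaussian mechanism with noise scale σ is (ε,δ)-differentially private: for all a, b ∈ ℝ with |a − b| ≤ Δ and every measurable set S ⊆ ℝ, N(a, σ²)(S) ≤ e^ε · N(b, σ²)(S) + δ. -/
/-!
For `b < a` the ratio `pₐ / p_b` of the densities of `N(a, σ²)` and `N(b, σ²)` is increasing, so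
`pₐ - e^ε p_b` is nonnegative exactly on a half-line `(t, ∞)`. Hence `N(a, σ²)(S) - e^ε N(b, σ²)(S)`
is largest for `S = (t, ∞)`, where it equals the left-hand side of the analytic-Gaussian condition
at sensitivity `c = a - b`. That expression is nondecreasing in `c`: its two density terms differ
by the factor `e^ε`, which leaves the derivative `φ(c / (2σ) - εσ / c) / σ ≥ 0`. So it is at most
its value at `Δ`. The case `a < b` follows by reflection, and `a = b` from `e^ε ≥ 1`.
-/

open MeasureTheory ProbabilityTheory Real

/-- The cumulative distribution function of the standard normal distribution. -/
noncomputable def stdNormalCDF (x : ℝ) : ℝ :=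
  ∫ t in Set.Iic x, (1 / Real.sqrt (2 * Real.pi)) * Real.exp (-(t ^ 2) / 2)

open scoped NNReal
open Set

theorem setIntegral_le_setIntegral_of_nonneg_on_of_nonpos_off {α : Type*} [MeasurableSpace α]
    {μ : Measure α} {h : α → ℝ} (hi : Integrable h μ) {S T : Set α} (hT : MeasurableSet T)
    (h_nonneg : ∀ x ∈ T, 0 ≤ h x) (h_nonpos : ∀ x ∉ T, h x ≤ 0) :
    ∫ x in S, h x ∂μ ≤ ∫ x in T, h x ∂μ := by
  have h_le : h ≤ T.indicator h := fun x => by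
    by_cases hx : x ∈ T
    · simp [hx]
    · simpa [hx] using h_nonpos x hx
  calc ∫ x in S, h x ∂μ ≤ ∫ x in S, T.indicator h x ∂μ :=
        setIntegral_mono hi.integrableOn (hi.indicator hT).integrableOn h_le
    _ ≤ ∫ x, T.indicator h x ∂μ :=
        setIntegral_le_integral (hi.indicator hT) (ae_of_all _ (indicator_nonneg h_nonneg))
    _ = ∫ x in T, h x ∂μ := integral_indicator hT

theorem gaussianReal_real_eq_setIntegral (m : ℝ) {v : ℝ≥0} (hv : v ≠ 0) (s : Set ℝ) :
    (gaussianReal m v).real s = ∫ x in s, gaussianPDFReal m v x := by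
  rw [measureReal_def, gaussianReal_apply_eq_integral _ hv,
    ENNReal.toReal_ofReal (integral_nonneg fun _ => gaussianPDFReal_nonneg _ _ _)]

theorem gaussianReal_apply_eq_neg (m : ℝ) (v : ℝ≥0) (s : Set ℝ) :
    gaussianReal m v s = gaussianReal (-m) v (-s) := by
  conv_lhs => rw [← neg_neg m, ← gaussianReal_map_neg]
  exact measurableEmbedding_neg.map_apply _ s

theorem gaussianPDFReal_eq_mul_exp (a b : ℝ) (v : ℝ≥0) (x : ℝ) :
    gaussianPDFReal b v x = gaussianPDFReal a v x * exp ((a - b) * (a + b - 2 * x) / (2 * v)) := by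
  simp only [gaussianPDFReal, mul_assoc, ← exp_add]
  ring_nf

theorem exp_mul_gaussianPDFReal_eq_mul_exp {v : ℝ≥0} {σ : ℝ} (hσ : σ ≠ 0) (hv : (v : ℝ) = σ ^ 2)
    {a b : ℝ} (hab : a ≠ b) (ε x : ℝ) :
    exp ε * gaussianPDFReal b v x = gaussianPDFReal a v x
      * exp ((a - b) * ((a + b) / 2 + ε * σ ^ 2 / (a - b) - x) / σ ^ 2) := by
  have hab' : a - b ≠ 0 := sub_ne_zero.2 hab
  rw [gaussianPDFReal_eq_mul_exp a b, mul_left_comm, ← exp_add, hv]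
  congr 2
  field_simp
  ring

theorem stdNormalCDF_eq_setIntegral (x : ℝ) :
    stdNormalCDF x = ∫ t in Iic x, gaussianPDFReal 0 1 t := by
  simp [stdNormalCDF, gaussianPDFReal]

theorem hasDerivAt_stdNormalCDF (x : ℝ) : HasDerivAt stdNormalCDF (gaussianPDFReal 0 1 x) x := by
  have hi := integrable_gaussianPDFReal 0 1
  have h : stdNormalCDF = fun y => stdNormalCDF 0 + ∫ t in (0 : ℝ)..y, gaussianPDFReal 0 1 t := by
    funext y
    rw [stdNormalCDF_eq_setIntegral, stdNormalCDF_eq_setIntegral,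
      ← intervalIntegral.integral_Iic_sub_Iic hi.integrableOn hi.integrableOn, add_sub_cancel]
  rw [h]
  exact (intervalIntegral.integral_hasDerivAt_right hi.intervalIntegrable
    (stronglyMeasurable_gaussianPDFReal 0 1).stronglyMeasurableAtFilter
    (by unfold gaussianPDFReal; fun_prop)).const_add _

theorem gaussianReal_real_Ioi {v : ℝ≥0} {σ : ℝ} (hσ : 0 < σ) (hv : (v : ℝ) = σ ^ 2) (m t : ℝ) :
    (gaussianReal m v).real (Ioi t) = stdNormalCDF ((m - t) / σ) := by
  have h_map : gaussianReal m v = (gaussianReal 0 1).map (fun y => m - σ * y) := by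
    rw [show (fun y => m - σ * y) = (m - ·) ∘ (σ * ·) from rfl,
      ← Measure.map_map (by fun_prop) (by fun_prop), gaussianReal_map_const_mul,
      gaussianReal_map_const_sub, mul_zero, sub_zero, mul_one]
    congr
    exact NNReal.eq hv
  have h_preimage : (fun y => m - σ * y) ⁻¹' Ioi t = Iio ((m - t) / σ) := by
    ext y
    simp only [mem_preimage, mem_Ioi, mem_Iio, lt_div_iff₀ hσ]
    constructor <;> intro <;> linarith
  have := nullSingletonClass_gaussianReal (μ := 0) one_ne_zero
  rw [h_map, map_measureReal_apply (by fun_prop) measurableSet_Ioi, h_preimage,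
    measureReal_congr Iio_ae_eq_Iic, gaussianReal_real_eq_setIntegral _ one_ne_zero,
    stdNormalCDF_eq_setIntegral]

/-- The left-hand side of the analytic-Gaussian condition, at sensitivity `c`. -/
noncomputable def analyticGaussianDelta (σ ε c : ℝ) : ℝ :=
  stdNormalCDF (c / (2 * σ) - ε * σ / c) - exp ε * stdNormalCDF (-(c / (2 * σ)) - ε * σ / c)

theorem exp_mul_gaussianPDFReal_zero_one_eq {σ c : ℝ} (hσ : σ ≠ 0) (hc : c ≠ 0) (ε : ℝ) :
    exp ε * gaussianPDFReal 0 1 (-(c / (2 * σ)) - ε * σ / c)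
      = gaussianPDFReal 0 1 (c / (2 * σ) - ε * σ / c) := by
  simp only [gaussianPDFReal, NNReal.coe_one, mul_left_comm (exp ε), ← exp_add]
  congr 2
  field_simp
  ring

theorem hasDerivAt_analyticGaussianDelta {σ c : ℝ} (hσ : σ ≠ 0) (hc : c ≠ 0) (ε : ℝ) :
    HasDerivAt (analyticGaussianDelta σ ε)
      (gaussianPDFReal 0 1 (c / (2 * σ) - ε * σ / c) / σ) c := by
  have h_half : HasDerivAt (fun y : ℝ => y / (2 * σ)) (1 / (2 * σ)) c :=
    (hasDerivAt_id c).div_const _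
  have h_inv : HasDerivAt (fun y : ℝ => ε * σ / y) (-(ε * σ) / c ^ 2) c := by
    simpa [div_eq_mul_inv, neg_div] using (hasDerivAt_inv hc).const_mul (ε * σ)
  have h := ((hasDerivAt_stdNormalCDF _).comp c (h_half.sub h_inv)).sub
    (((hasDerivAt_stdNormalCDF _).comp c (h_half.neg.sub h_inv)).const_mul (exp ε))
  refine h.congr_deriv ?_
  simp only [Pi.sub_apply, Pi.neg_apply]
  rw [← mul_assoc, exp_mul_gaussianPDFReal_zero_one_eq hσ hc]
  field_simp
  ring

theorem monotoneOn_analyticGaussianDelta {σ : ℝ} (hσ : 0 < σ) (ε : ℝ) :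
    MonotoneOn (analyticGaussianDelta σ ε) (Ioi 0) := by
  have h_deriv (c : ℝ) (hc : c ∈ Ioi 0) := hasDerivAt_analyticGaussianDelta hσ.ne' (ne_of_gt hc) ε
  refine monotoneOn_of_deriv_nonneg (convex_Ioi 0)
    (fun c hc => (h_deriv c hc).continuousAt.continuousWithinAt) ?_ ?_
  all_goals rw [interior_Ioi]
  · exact fun c hc => (h_deriv c hc).differentiableAt.differentiableWithinAt
  · intro c hc
    rw [(h_deriv c hc).deriv]
    exact div_nonneg (gaussianPDFReal_nonneg _ _ _) hσ.le

theorem gaussianReal_real_le_exp_mul_add_analyticGaussianDelta {v : ℝ≥0} {σ : ℝ} (hσ : 0 < σ)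
    (hv : (v : ℝ) = σ ^ 2) (ε : ℝ) {a b : ℝ} (hba : b < a) (S : Set ℝ) :
    (gaussianReal a v).real S
      ≤ exp ε * (gaussianReal b v).real S + analyticGaussianDelta σ ε (a - b) := by
  have hv₀ : v ≠ 0 := by rw [← NNReal.coe_ne_zero, hv]; positivity
  have hab : a - b ≠ 0 := sub_ne_zero.2 hba.ne'
  have h_ratio := exp_mul_gaussianPDFReal_eq_mul_exp hσ.ne' hv hba.ne' ε
  set t := (a + b) / 2 + ε * σ ^ 2 / (a - b) with ht
  have h_nonneg (x : ℝ) (hx : x ∈ Ioi t) :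
      0 ≤ gaussianPDFReal a v x - exp ε * gaussianPDFReal b v x := by
    rw [h_ratio, sub_nonneg]
    refine mul_le_of_le_one_right (gaussianPDFReal_nonneg _ _ _) (exp_le_one_iff.2 ?_)
    exact div_nonpos_of_nonpos_of_nonneg
      (mul_nonpos_of_nonneg_of_nonpos (by linarith) (by linarith [mem_Ioi.1 hx])) (sq_nonneg σ)
  have h_nonpos (x : ℝ) (hx : x ∉ Ioi t) :
      gaussianPDFReal a v x - exp ε * gaussianPDFReal b v x ≤ 0 := by
    rw [h_ratio, sub_nonpos]
    refine le_mul_of_one_le_right (gaussianPDFReal_nonneg _ _ _) (one_le_exp ?_)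
    exact div_nonneg (mul_nonneg (by linarith) (by linarith [notMem_Ioi.1 hx])) (sq_nonneg σ)
  have h_int : Integrable (fun x => gaussianPDFReal a v x - exp ε * gaussianPDFReal b v x) :=
    (integrable_gaussianPDFReal a v).sub ((integrable_gaussianPDFReal b v).const_mul _)
  have h_setIntegral (s : Set ℝ) :
      ∫ x in s, (gaussianPDFReal a v x - exp ε * gaussianPDFReal b v x)
        = (gaussianReal a v).real s - exp ε * (gaussianReal b v).real s := by
    rw [integral_sub (integrable_gaussianPDFReal a v).integrableOn
      ((integrable_gaussianPDFReal b v).const_mul _).integrableOn,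
      integral_const_mul, gaussianReal_real_eq_setIntegral a hv₀,
      gaussianReal_real_eq_setIntegral b hv₀]
  have h_le := setIntegral_le_setIntegral_of_nonneg_on_of_nonpos_off h_int (S := S)
    measurableSet_Ioi h_nonneg h_nonpos
  have h_a : (a - t) / σ = (a - b) / (2 * σ) - ε * σ / (a - b) := by
    rw [ht]; field_simp; ring
  have h_b : (b - t) / σ = -((a - b) / (2 * σ)) - ε * σ / (a - b) := by
    rw [ht]; field_simp; ring
  rw [h_setIntegral, h_setIntegral, gaussianReal_real_Ioi hσ hv, gaussianReal_real_Ioi hσ hv,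
    h_a, h_b] at h_le
  rw [analyticGaussianDelta]
  linarith

theorem gaussianReal_le_exp_mul_add_of_analyticGaussianDelta_le {v : ℝ≥0} {σ ε δ Δ : ℝ}
    (hσ : 0 < σ) (hv : (v : ℝ) = σ ^ 2) (hδ : 0 ≤ δ) (hAG : analyticGaussianDelta σ ε Δ ≤ δ)
    {a b : ℝ} (hba : b < a) (hab : a - b ≤ Δ) (S : Set ℝ) :
    gaussianReal a v S ≤ ENNReal.ofReal (exp ε) * gaussianReal b v S + ENNReal.ofReal δ := by
  have h_mono := monotoneOn_analyticGaussianDelta hσ ε (sub_pos.2 hba)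
    (lt_of_lt_of_le (sub_pos.2 hba) hab) hab
  have h_real := gaussianReal_real_le_exp_mul_add_analyticGaussianDelta hσ hv ε hba S
  rw [← ofReal_measureReal (μ := gaussianReal a _), ← ofReal_measureReal (μ := gaussianReal b _),
    ← ENNReal.ofReal_mul (exp_nonneg ε), ← ENNReal.ofReal_add (by positivity) hδ]
  exact ENNReal.ofReal_le_ofReal (by linarith)

theorem analytic_gaussian_mechanism_dp_general
    (Δ σ ε δ : ℝ) (hσ : 0 < σ) (hε : 0 ≤ ε) (hδ : δ ∈ Set.Icc (0 : ℝ) 1)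
    (hAG : stdNormalCDF (Δ / (2 * σ) - ε * σ / Δ)
        - Real.exp ε * stdNormalCDF (-(Δ / (2 * σ)) - ε * σ / Δ) ≤ δ) :
    ∀ a b : ℝ, |a - b| ≤ Δ → ∀ S : Set ℝ, MeasurableSet S →
      gaussianReal a ⟨σ ^ 2, sq_nonneg σ⟩ S ≤
        ENNReal.ofReal (Real.exp ε) * gaussianReal b ⟨σ ^ 2, sq_nonneg σ⟩ S
          + ENNReal.ofReal δ := by
  intro a b hab S _
  set v : ℝ≥0 := ⟨σ ^ 2, sq_nonneg σ⟩
  have hv : (v : ℝ) = σ ^ 2 := rfl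
  obtain ⟨hab_lower, hab_upper⟩ := abs_le.1 hab
  rcases lt_trichotomy a b with h_lt | rfl | h_gt
  · rw [gaussianReal_apply_eq_neg a, gaussianReal_apply_eq_neg b]
    exact gaussianReal_le_exp_mul_add_of_analyticGaussianDelta_le hσ hv hδ.1 hAG
      (neg_lt_neg h_lt) (by linarith) _
  · exact le_add_right (le_mul_of_one_le_left zero_le (ENNReal.one_le_ofReal.2 (one_le_exp hε)))
  · exact gaussianReal_le_exp_mul_add_of_analyticGaussianDelta_le hσ hv hδ.1 hAG h_gt hab_upper S

/-- If the analytic-Gaussian condition holds, then the one-dimensional Gaussian mechanism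
with noise scale `σ` is `(ε, δ)`-differentially private on pairs at distance at most `Δ`. -/
theorem analytic_gaussian_mechanism_dp
    (Δ σ ε δ : ℝ) (hΔ : 0 < Δ) (hσ : 0 < σ) (hε : 0 ≤ ε) (hδ : δ ∈ Set.Icc (0 : ℝ) 1)
    (hAG : stdNormalCDF (Δ / (2 * σ) - ε * σ / Δ)
        - Real.exp ε * stdNormalCDF (-(Δ / (2 * σ)) - ε * σ / Δ) ≤ δ) :
    ∀ a b : ℝ, |a - b| ≤ Δ → ∀ S : Set ℝ, MeasurableSet S →
      gaussianReal a ⟨σ ^ 2, sq_nonneg σ⟩ S ≤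
        ENNReal.ofReal (Real.exp ε) * gaussianReal b ⟨σ ^ 2, sq_nonneg σ⟩ S
          + ENNReal.ofReal δ :=
  analytic_gaussian_mechanism_dp_general Δ σ ε δ hσ hε hδ hAG
end

section
/- Let Δ > 0, σ > 0, ε ≥ 0 and δ ∈ [0,1]. If for all a, b ∈ ℝ with |a − b| ≤ Δ and every measurable set S ⊆ ℝ one has N(a, σ²)(S) ≤ e^ε · N(b, σ²)(S) + δ, then the analytic-Gaussian condition holds: Φ(Δ/(2σ) − εσ/Δ) − e^ε·Φ(−Δ/(2σ) − εσ/Δ) ≤ δ. -/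
open MeasureTheory ProbabilityTheory Real

lemma stdNormalCDF_nonneg (x : ℝ) : 0 ≤ stdNormalCDF x :=
  setIntegral_nonneg measurableSet_Iic fun _ _ => by positivity

lemma gaussianReal_zero_one_Iic (x : ℝ) :
    gaussianReal 0 1 (Set.Iic x) = ENNReal.ofReal (stdNormalCDF x) := by
  rw [gaussianReal_apply_eq_integral 0 one_ne_zero, stdNormalCDF]
  congr 1
  refine setIntegral_congr_fun measurableSet_Iic fun t _ => ?_
  simp [gaussianPDFReal, one_div]

lemma gaussianReal_map_standardize (μ : ℝ) {v : NNReal} {σ : ℝ} (hσ : σ ≠ 0)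
    (hv : (v : ℝ) = σ ^ 2) :
    (gaussianReal μ v).map (fun x => (μ - x) / σ) = gaussianReal 0 1 := by
  have : (fun x => (μ - x) / σ) = (· / σ) ∘ (μ - ·) := rfl
  rw [this, ← Measure.map_map (by fun_prop) (by fun_prop), gaussianReal_map_const_sub,
    gaussianReal_map_div_const, sub_self, zero_div]
  congr 1
  ext
  simp [hv, hσ]

lemma gaussianReal_Ici (μ t : ℝ) {v : NNReal} {σ : ℝ} (hσ : 0 < σ) (hv : (v : ℝ) = σ ^ 2) :
    gaussianReal μ v (Set.Ici t)
      = ENNReal.ofReal (stdNormalCDF ((μ - t) / σ)) := by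
  have hpre : (fun x => (μ - x) / σ) ⁻¹' Set.Iic ((μ - t) / σ) = Set.Ici t := by
    ext x
    simp only [Set.mem_preimage, Set.mem_Iic, Set.mem_Ici, div_le_div_iff_of_pos_right hσ,
      sub_le_sub_iff_left]
  rw [← gaussianReal_zero_one_Iic, ← gaussianReal_map_standardize μ hσ.ne' hv,
    Measure.map_apply (by fun_prop) measurableSet_Iic, hpre]

lemma le_mul_add_of_ofReal_le {a b c d : ℝ} (hb : 0 ≤ b) (hc : 0 ≤ c) (hd : 0 ≤ d)
    (h : ENNReal.ofReal a ≤ ENNReal.ofReal b * ENNReal.ofReal c + ENNReal.ofReal d) :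
    a ≤ b * c + d := by
  rw [← ENNReal.ofReal_mul hb, ← ENNReal.ofReal_add (mul_nonneg hb hc) hd,
    ENNReal.ofReal_le_ofReal_iff (by positivity)] at h
  exact h

theorem dp_implies_analytic_gaussian_condition_general
    (Δ σ ε δ : ℝ) (hΔ : 0 < Δ) (hσ : 0 < σ) (hδ : δ ∈ Set.Icc (0 : ℝ) 1)
    (hDP : ∀ a b : ℝ, |a - b| ≤ Δ → ∀ S : Set ℝ, MeasurableSet S →
      gaussianReal a ⟨σ ^ 2, sq_nonneg σ⟩ S ≤
        ENNReal.ofReal (Real.exp ε) * gaussianReal b ⟨σ ^ 2, sq_nonneg σ⟩ S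
          + ENNReal.ofReal δ) :
    stdNormalCDF (Δ / (2 * σ) - ε * σ / Δ)
      - Real.exp ε * stdNormalCDF (-(Δ / (2 * σ)) - ε * σ / Δ) ≤ δ := by
  set t := Δ / 2 + ε * σ ^ 2 / Δ with ht
  have hS := hDP Δ 0 (by rw [sub_zero, abs_of_pos hΔ]) (Set.Ici t) measurableSet_Ici
  rw [gaussianReal_Ici Δ t (v := ⟨σ ^ 2, sq_nonneg σ⟩) hσ rfl,
    gaussianReal_Ici 0 t (v := ⟨σ ^ 2, sq_nonneg σ⟩) hσ rfl] at hS
  have hshift : (Δ - t) / σ = Δ / (2 * σ) - ε * σ / Δ := by rw [ht]; field_simp; ring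
  have hshift₀ : (0 - t) / σ = -(Δ / (2 * σ)) - ε * σ / Δ := by rw [ht]; field_simp; ring
  rw [hshift, hshift₀] at hS
  linarith [le_mul_add_of_ofReal_le (exp_nonneg ε) (stdNormalCDF_nonneg _) hδ.1 hS]

/-- If the one-dimensional Gaussian mechanism with noise scale `σ` is `(ε, δ)`-differentially
private on pairs at distance at most `Δ`, then the analytic-Gaussian condition holds. -/
theorem dp_implies_analytic_gaussian_condition
    (Δ σ ε δ : ℝ) (hΔ : 0 < Δ) (hσ : 0 < σ) (hε : 0 ≤ ε) (hδ : δ ∈ Set.Icc (0 : ℝ) 1)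
    (hDP : ∀ a b : ℝ, |a - b| ≤ Δ → ∀ S : Set ℝ, MeasurableSet S →
      gaussianReal a ⟨σ ^ 2, sq_nonneg σ⟩ S ≤
        ENNReal.ofReal (Real.exp ε) * gaussianReal b ⟨σ ^ 2, sq_nonneg σ⟩ S
          + ENNReal.ofReal δ) :
    stdNormalCDF (Δ / (2 * σ) - ε * σ / Δ)
      - Real.exp ε * stdNormalCDF (-(Δ / (2 * σ)) - ε * σ / Δ) ≤ δ :=
  dp_implies_analytic_gaussian_condition_general Δ σ ε δ hΔ hσ hδ hDP
end
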